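/- arXiv:1612.07405 — 4 statements merged into one kernel-verified Lean document; each statement's English description precedes it below -/
import Mathlib

section
/- For all real numbers η > 0 and w > 0, the collision probability of the random-line LSH family evaluates in closed form: ∫₀^w (2/(√(2π)·η))·exp(−t²/(2η²))·(1 − t/w) dt = erf(w/(√2·η)) − √(2/π)·(η/w)·(1 − exp(−w²/(2η²))). -/
open Real

/-!
The integrand is the half-normal density of `|⟨p,v⟩ - ⟨q,v⟩| ~ |N(0, η²)|` times the tent weight
`1 - t/w`. With `c = √2 η` the constant part integrates, after the substitution `u = t/c`, to a
multiple of `erf (w / c)`, while `t ↦ t · exp (-t²/c²)` has the elementary antiderivative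
`-(c²/2) · exp (-t²/c²)`.
-/

noncomputable def erf (x : ℝ) : ℝ :=
  (2 / Real.sqrt π) * ∫ t in (0:ℝ)..x, Real.exp (-t ^ 2)

theorem integral_exp_neg_sq_div_sq {c : ℝ} (hc : c ≠ 0) (w : ℝ) :
    ∫ t in (0:ℝ)..w, exp (-t ^ 2 / c ^ 2) = √π / 2 * c * erf (w / c) := by
  have hπ : √π ≠ 0 := (sqrt_pos.2 pi_pos).ne'
  have hsub := intervalIntegral.integral_comp_div (a := 0) (b := w) (fun u => exp (-u ^ 2)) hc
  simp only [zero_div, div_pow, ← neg_div] at hsub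
  rw [hsub, erf, smul_eq_mul]
  field_simp

theorem integral_mul_exp_neg_sq_div_sq {c : ℝ} (hc : c ≠ 0) (w : ℝ) :
    ∫ t in (0:ℝ)..w, t * exp (-t ^ 2 / c ^ 2) = c ^ 2 / 2 * (1 - exp (-w ^ 2 / c ^ 2)) := by
  have hderiv : ∀ t ∈ Set.uIcc 0 w, HasDerivAt (fun t => -(c ^ 2 / 2) * exp (-t ^ 2 / c ^ 2))
      (t * exp (-t ^ 2 / c ^ 2)) t := fun t _ => by
    have hexponent : HasDerivAt (fun t => -t ^ 2 / c ^ 2) (-(2 * t) / c ^ 2) t := by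
      simpa using (hasDerivAt_pow 2 t).neg.div_const (c ^ 2)
    exact (hexponent.exp.const_mul _).congr_deriv (by field_simp)
  rw [intervalIntegral.integral_eq_sub_of_hasDerivAt hderiv
    (Continuous.intervalIntegrable (by fun_prop) _ _)]
  norm_num
  ring

theorem integral_exp_neg_sq_div_sq_mul_one_sub_div {c : ℝ} (hc : c ≠ 0) (w : ℝ) :
    ∫ t in (0:ℝ)..w, exp (-t ^ 2 / c ^ 2) * (1 - t / w)
      = √π / 2 * c * erf (w / c) - c ^ 2 / (2 * w) * (1 - exp (-w ^ 2 / c ^ 2)) := by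
  have hsplit : ∀ t, exp (-t ^ 2 / c ^ 2) * (1 - t / w)
      = exp (-t ^ 2 / c ^ 2) - w⁻¹ * (t * exp (-t ^ 2 / c ^ 2)) := fun t => by ring
  simp_rw [hsplit]
  rw [intervalIntegral.integral_sub (Continuous.intervalIntegrable (by fun_prop) _ _)
      (Continuous.intervalIntegrable (by fun_prop) _ _),
    intervalIntegral.integral_const_mul, integral_exp_neg_sq_div_sq hc,
    integral_mul_exp_neg_sq_div_sq hc]
  ring

theorem collision_probability_closed_form_general (η w : ℝ) (hη : 0 < η) :
    (∫ t in (0:ℝ)..w,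
        (2 / (Real.sqrt (2 * π) * η)) * Real.exp (-t ^ 2 / (2 * η ^ 2)) * (1 - t / w))
      = erf (w / (Real.sqrt 2 * η))
        - Real.sqrt (2 / π) * (η / w) * (1 - Real.exp (-w ^ 2 / (2 * η ^ 2))) := by
  have hc : √2 * η ≠ 0 := by positivity
  have hc_sq : 2 * η ^ 2 = (√2 * η) ^ 2 := by rw [mul_pow, sq_sqrt zero_le_two]
  simp_rw [hc_sq, mul_assoc (2 / (√(2 * π) * η))]
  rw [intervalIntegral.integral_const_mul, integral_exp_neg_sq_div_sq_mul_one_sub_div hc,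
    sqrt_mul zero_le_two, sqrt_div zero_le_two]
  have hπ : 0 < √π := sqrt_pos.2 pi_pos
  field_simp

/-- Closed form for the collision probability of the random-line LSH family. -/
theorem collision_probability_closed_form (η w : ℝ) (hη : 0 < η) (hw : 0 < w) :
    (∫ t in (0:ℝ)..w,
        (2 / (Real.sqrt (2 * π) * η)) * Real.exp (-t ^ 2 / (2 * η ^ 2)) * (1 - t / w))
      = erf (w / (Real.sqrt 2 * η))
        - Real.sqrt (2 / π) * (η / w) * (1 - Real.exp (-w ^ 2 / (2 * η ^ 2))) :=
  collision_probability_closed_form_general η w hη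
end

section
/- The function c ↦ erf(c/√2) − √(2/π)·(1/c)·(1 − exp(−c²/2)) is concave on the interval [1, 2]. -/
/-!
The derivative of `p₁` is `√(2/π) (1 - e^{-c²/2}) / c² = (√(2/π) / 2) (1 - e^{-t}) / t` with
`t = c² / 2`, and `(1 - e^{-t}) / t` is the slope of `exp` over `[-t, 0]`, which decreases in `t`
because `exp` is convex. So `p₁'` is antitone on `(0, ∞)`.
-/

open Real

open Set

noncomputable def p1 (c : ℝ) : ℝ :=
  erf (c / √2) - √(2 / π) * (1 / c) * (1 - exp (-c ^ 2 / 2))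

lemma hasDerivAt_erf (x : ℝ) : HasDerivAt erf (2 / √π * exp (-x ^ 2)) x := by
  have hc : Continuous fun t : ℝ => exp (-t ^ 2) := by fun_prop
  exact (intervalIntegral.integral_hasDerivAt_right (hc.intervalIntegrable 0 x)
    (hc.stronglyMeasurableAtFilter _ _) hc.continuousAt).const_mul _

lemma hasDerivAt_p1 {c : ℝ} (hc : c ≠ 0) :
    HasDerivAt p1 (√(2 / π) * (1 - exp (-c ^ 2 / 2)) / c ^ 2) c := by
  have herf := (hasDerivAt_erf (c / √2)).comp c ((hasDerivAt_id c).div_const √2)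
  have hexp := ((hasDerivAt_pow 2 c).neg.div_const 2).exp
  have hinv : HasDerivAt (fun x => 1 / x) (-(c ^ 2)⁻¹) c := by
    simpa only [one_div] using hasDerivAt_inv hc
  have hdiv := hinv.const_mul √(2 / π)
  refine (herf.sub (hdiv.mul ((hasDerivAt_const c 1).sub hexp))).congr_deriv ?_
  have h2 : √2 ^ 2 = 2 := sq_sqrt zero_le_two
  simp only [Pi.sub_apply, Pi.neg_apply, div_pow, h2, sqrt_div' _ pi_pos.le]
  field_simp
  rw [h2]
  ring

lemma antitoneOn_one_sub_exp_neg_div : AntitoneOn (fun t => (1 - exp (-t)) / t) (Ioi 0) := by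
  intro s hs t ht hst
  have := convexOn_exp.secant_mono (mem_univ 0) (mem_univ (-t)) (mem_univ (-s))
    (neg_ne_zero.2 ht.ne') (neg_ne_zero.2 hs.ne') (neg_le_neg hst)
  simpa only [exp_zero, sub_zero, div_neg, ← neg_div, neg_sub] using this

lemma antitoneOn_deriv_p1 : AntitoneOn (deriv p1) (Ioi 0) := by
  intro a ha b hb hab
  rw [(hasDerivAt_p1 ha.ne').deriv, (hasDerivAt_p1 hb.ne').deriv]
  have key := antitoneOn_one_sub_exp_neg_div (mem_Ioi.2 (half_pos (pow_pos ha 2)))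
    (mem_Ioi.2 (half_pos (pow_pos hb 2))) (by gcongr; exact ha.le)
  have := mul_le_mul_of_nonneg_left key (by positivity : 0 ≤ √(2 / π) / 2)
  simp only [neg_div] at this ⊢
  convert this using 1 <;> field_simp

theorem concaveOn_p1 : ConcaveOn ℝ (Ioi 0) p1 := by
  apply AntitoneOn.concaveOn_of_deriv (convex_Ioi 0)
  · exact fun c hc => (hasDerivAt_p1 hc.ne').continuousAt.continuousWithinAt
  · rw [interior_Ioi]
    exact fun c hc => (hasDerivAt_p1 hc.ne').differentiableAt.differentiableWithinAt
  · rw [interior_Ioi]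
    exact antitoneOn_deriv_p1

/-- The collision probability `p₁(c)` of the random-line LSH family with window width
`w = c` for points at distance 1 is concave on `[1, 2]`. -/
theorem p1_concaveOn :
    ConcaveOn ℝ (Set.Icc (1:ℝ) 2)
      (fun c => erf (c / Real.sqrt 2)
        - Real.sqrt (2 / π) * (1 / c) * (1 - Real.exp (-c ^ 2 / 2))) :=
  concaveOn_p1.subset (fun _ hc => lt_of_lt_of_le one_pos hc.1) (convex_Icc 1 2)
end

section
/- For every c ∈ (1, 2], it holds that p₁(c) − p₂ > 5(c−1)/21, where p₁(c) = erf(c/√2) − √(2/π)·(1/c)·(1 − exp(−c²/2)) and p₂ = erf(1/√2) − √(2/π)·(1 − exp(−1/2)). -/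
/-!
Let `p(w)` be the collision probability at distance 1 with window `w`. Its derivative
`√(2/π) (1 - e^{-w²/2}) / w²` is strictly decreasing, because `(1 - e^{-u}) / u` is a secant slope
of the convex function `exp`; hence `p` is concave and `p(c) - p(1) ≥ (c - 1) (p(2) - p(1))` for
`c ∈ [1, 2]`. It remains to check numerically that `p(2) - p(1) ≈ 0.2408` exceeds `5/21 ≈ 0.2381`.
The only non-elementary quantity there is `∫_{1/√2}^{√2} e^{-t²} dt`, which we bound below by
integrating a polynomial lower bound for `e^{-t²}`.
-/

open Real

open Set

lemma two_div_sqrt_pi : 2 / √π = √(2 / π) * √2 := by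
  have h2 : √2 * √2 = 2 := mul_self_sqrt zero_le_two
  rw [sqrt_div' _ pi_pos.le]
  field_simp
  linear_combination -h2

lemma continuous_exp_neg_sq : Continuous fun t : ℝ => exp (-t ^ 2) := by fun_prop

lemma erf_sub_erf (a b : ℝ) : erf b - erf a = 2 / √π * ∫ t in a..b, exp (-t ^ 2) := by
  rw [erf, erf, ← mul_sub, intervalIntegral.integral_interval_sub_left
    (continuous_exp_neg_sq.intervalIntegrable _ _) (continuous_exp_neg_sq.intervalIntegrable _ _)]

-- `p₁(c) = collisionProb c` and, by scale invariance, `p₂ = collisionProb 1`.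
noncomputable def collisionProb (w : ℝ) : ℝ :=
  erf (w / √2) - √(2 / π) * (1 / w) * (1 - exp (-w ^ 2 / 2))

lemma hasDerivAt_collisionProb {w : ℝ} (hw : w ≠ 0) :
    HasDerivAt collisionProb (√(2 / π) * ((1 - exp (-w ^ 2 / 2)) / w ^ 2)) w := by
  have h2 : √2 ^ 2 = 2 := sq_sqrt zero_le_two
  have herf : HasDerivAt (fun w => erf (w / √2)) (√(2 / π) * exp (-w ^ 2 / 2)) w := by
    refine ((hasDerivAt_erf (w / √2)).comp w ((hasDerivAt_id w).div_const √2)).congr_deriv ?_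
    rw [two_div_sqrt_pi, div_pow, h2, neg_div]
    field_simp
  have hexp : HasDerivAt (fun w => 1 - exp (-w ^ 2 / 2)) (w * exp (-w ^ 2 / 2)) w :=
    ((hasDerivAt_pow 2 w).fun_neg.div_const 2).exp.const_sub 1 |>.congr_deriv (by push_cast; ring)
  have hinv : HasDerivAt (fun w : ℝ => 1 / w) (-(w ^ 2)⁻¹) w := by
    simpa only [one_div] using hasDerivAt_inv hw
  refine (herf.sub ((hinv.const_mul (√(2 / π))).mul hexp)).congr_deriv ?_
  field_simp
  ring

lemma strictAntiOn_one_sub_exp_neg_div : StrictAntiOn (fun u => (1 - exp (-u)) / u) (Ioi 0) := by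
  intro u (hu : 0 < u) v (hv : 0 < v) huv
  have h := strictConvexOn_exp.secant_strict_mono (mem_univ 0) (mem_univ (-v)) (mem_univ (-u))
    (by linarith) (by linarith) (neg_lt_neg huv)
  simpa [div_neg, ← neg_div] using h

lemma strictConcaveOn_collisionProb : StrictConcaveOn ℝ (Ioi 0) collisionProb := by
  refine StrictAntiOn.strictConcaveOn_of_deriv (convex_Ioi 0)
    (fun w hw => (hasDerivAt_collisionProb (ne_of_gt hw)).continuousAt.continuousWithinAt) ?_
  rw [interior_Ioi]
  intro a (ha : 0 < a) b (hb : 0 < b) hab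
  simp only [(hasDerivAt_collisionProb ha.ne').deriv, (hasDerivAt_collisionProb hb.ne').deriv]
  have hrescale : ∀ x : ℝ, x ≠ 0 → √(2 / π) * ((1 - exp (-x ^ 2 / 2)) / x ^ 2)
      = √(2 / π) / 2 * ((1 - exp (-(x ^ 2 / 2))) / (x ^ 2 / 2)) := by
    intro x hx
    rw [neg_div]
    field_simp
  rw [hrescale a ha.ne', hrescale b hb.ne']
  exact mul_lt_mul_of_pos_left (strictAntiOn_one_sub_exp_neg_div (by positivity : 0 < a ^ 2 / 2)
    (by positivity : 0 < b ^ 2 / 2) (by gcongr)) (by positivity)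

-- `e^{-1} e^y` with `y = 1 - t²`, where `e^y` is replaced by its degree-5 Taylor polynomial minus
-- the error bound `|y|⁶ · 7 / (6! · 6)` of `Real.exp_bound`.
noncomputable def expNegSqTaylorLower (t : ℝ) : ℝ :=
  exp (-1) * (∑ m ∈ Finset.range 6, (1 - t ^ 2) ^ m / m.factorial - (1 - t ^ 2) ^ 6 * (7 / 4320))

lemma expNegSqTaylorLower_le {t : ℝ} (ht : t ^ 2 ≤ 2) : expNegSqTaylorLower t ≤ exp (-t ^ 2) := by
  have hy : |1 - t ^ 2| ≤ 1 := abs_le.2 ⟨by linarith, by nlinarith [sq_nonneg t]⟩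
  have hb := (abs_sub_le_iff.1 (Real.exp_bound hy (n := 6) (by norm_num))).2
  rw [(by norm_num : Even 6).pow_abs] at hb
  norm_num [Nat.factorial] at hb
  rw [show -t ^ 2 = -1 + (1 - t ^ 2) by ring, exp_add, expNegSqTaylorLower]
  gcongr
  linarith

open Polynomial in
lemma integral_expNegSqTaylorLower : ∫ t in (1 / √2)..√2, expNegSqTaylorLower t
    = exp (-1) * (768668129 / 1660538880) * √2 := by
  let p : ℝ[X] := X * (C (11729/4320) - C (1943/2160) * X ^ 2 + C (377/1440) * (X ^ 2) ^ 2
    - C (83/1512) * (X ^ 2) ^ 3 + C (17/2592) * (X ^ 2) ^ 4 + C (1/7920) * (X ^ 2) ^ 5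
    - C (7/56160) * (X ^ 2) ^ 6)
  have hp : ∀ t, HasDerivAt (fun t => exp (-1) * p.eval t) (expNegSqTaylorLower t) t := fun t =>
    ((p.hasDerivAt t).const_mul _).congr_deriv (by
      simp [p, expNegSqTaylorLower, Finset.sum_range_succ, Nat.factorial, ← pow_mul]
      ring)
  rw [intervalIntegral.integral_eq_sub_of_hasDerivAt (fun t _ => hp t)
    (Continuous.intervalIntegrable (by unfold expNegSqTaylorLower; fun_prop) _ _)]
  have h2 : √2 ^ 2 = 2 := sq_sqrt zero_le_two
  have hinv : 1 / √2 = √2 / 2 := by field_simp; simp [h2]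
  have hinv2 : (√2 / 2) ^ 2 = 1 / 2 := by rw [div_pow, h2]; norm_num
  simp only [p, hinv, eval_sub, eval_add, eval_mul, eval_C, eval_X, eval_pow, h2, hinv2]
  ring

lemma sqrt_two_div_pi_gt : 0.79 < √(2 / π) := by
  rw [lt_sqrt (by norm_num), lt_div_iff₀ pi_pos]
  nlinarith [pi_lt_d2]

lemma exp_neg_half_gt : 0.6065 < exp (-1 / 2) := by
  have hsq : exp (-1 / 2) ^ 2 * exp 1 = 1 := by
    rw [← exp_nat_mul, ← exp_add]; norm_num
  nlinarith [exp_one_lt_d9, exp_pos (-1 / 2), exp_pos 1]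

lemma integral_exp_neg_sq_ge :
    exp (-1) * (768668129 / 1660538880) * √2 ≤ ∫ t in (1 / √2)..√2, exp (-t ^ 2) := by
  have h2 : √2 ^ 2 = 2 := sq_sqrt zero_le_two
  rw [← integral_expNegSqTaylorLower]
  refine intervalIntegral.integral_mono_on (by rw [div_le_iff₀ (by positivity)]; nlinarith)
    (Continuous.intervalIntegrable (by unfold expNegSqTaylorLower; fun_prop) _ _)
    (continuous_exp_neg_sq.intervalIntegrable _ _) fun t ht => expNegSqTaylorLower_le ?_
  nlinarith [ht.2, ht.1, (by positivity : (0 : ℝ) < 1 / √2)]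

lemma collisionProb_two_sub_one : collisionProb 2 - collisionProb 1
    = √(2 / π) * (√2 * (∫ t in (1 / √2)..√2, exp (-t ^ 2)) - (1 - exp (-2)) / 2
      + (1 - exp (-1 / 2))) := by
  have h2 : 2 / √2 = √2 := div_sqrt
  have herf := erf_sub_erf (1 / √2) √2
  rw [two_div_sqrt_pi] at herf
  simp only [collisionProb, h2, show -(2:ℝ) ^ 2 / 2 = -2 by norm_num,
    show -(1:ℝ) ^ 2 / 2 = -1 / 2 by norm_num]
  linear_combination herf

lemma collisionProb_two_sub_one_gt : 5 / 21 < collisionProb 2 - collisionProb 1 := by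
  have hI := integral_exp_neg_sq_ge
  have ha := exp_neg_half_gt
  have hs := sqrt_two_div_pi_gt
  have h2 : √2 * √2 = 2 := mul_self_sqrt zero_le_two
  have he1 : exp (-1) = exp (-1 / 2) ^ 2 := by rw [← exp_nat_mul]; norm_num
  have he2 : exp (-2) = exp (-1 / 2) ^ 4 := by rw [← exp_nat_mul]; norm_num
  -- After `hI`, the bound is increasing in `e^{-1/2}`, so its lower bound `ha` suffices.
  have hX : 0.3015 < √2 * (∫ t in (1 / √2)..√2, exp (-t ^ 2)) - (1 - exp (-2)) / 2
      + (1 - exp (-1 / 2)) := by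
    have h2I := mul_le_mul_of_nonneg_left hI (sqrt_nonneg 2)
    rw [he1] at h2I
    rw [he2]
    nlinarith [mul_pos (sub_pos.2 ha) (sub_pos.2 ha)]
  rw [collisionProb_two_sub_one]
  nlinarith

/-- For every `c ∈ (1,2]`, `p₁(c) − p₂ > 5(c−1)/21`. -/
theorem p1_sub_p2_gt (c : ℝ) (hc : c ∈ Set.Ioc (1:ℝ) 2) :
    (erf (c / Real.sqrt 2) - Real.sqrt (2 / π) * (1 / c) * (1 - Real.exp (-c ^ 2 / 2)))
      - (erf (1 / Real.sqrt 2) - Real.sqrt (2 / π) * (1 - Real.exp (-(1:ℝ) / 2)))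
      > 5 * (c - 1) / 21 := by
  obtain ⟨hc1, hc2⟩ := hc
  have hp2 : erf (1 / √2) - √(2 / π) * (1 - exp (-(1:ℝ) / 2)) = collisionProb 1 := by
    simp [collisionProb]
  rw [hp2]
  show collisionProb c - collisionProb 1 > 5 * (c - 1) / 21
  have hconc := strictConcaveOn_collisionProb.concaveOn.2 (mem_Ioi.2 one_pos)
    (mem_Ioi.2 two_pos) (show 0 ≤ 2 - c by linarith) (show 0 ≤ c - 1 by linarith)
    (by ring)
  simp only [smul_eq_mul, show (2 - c) * 1 + (c - 1) * 2 = c by ring] at hconc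
  nlinarith [collisionProb_two_sub_one_gt]
end

section
/- Let w > 0 and let t be a random variable uniformly distributed on [0, w). Then for all real numbers x and y, Pr[ ⌊(x + t)/w⌋ = ⌊(y + t)/w⌋ ] = max(0, 1 − |x − y|/w). -/
/-!
The collision set `{t | ⌊(x + t) / w⌋ = ⌊(y + t) / w⌋}` is `w`-periodic, so its measure inside a
window of length `w` does not depend on where the window starts. On the window `[-x, -x + w)`,
after the shift `s = x + t`, the left floor vanishes and the condition becomes
`s + (y - x) ∈ [0, w)`, which cuts `[0, w)` down to an interval of length `max 0 (w - |x - y|)`.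
-/

open MeasureTheory

section FloorDiv

variable {K : Type*} [Field K] [LinearOrder K] [IsStrictOrderedRing K] [FloorRing K]

theorem Int.floor_add_div_self {w : K} (hw : w ≠ 0) (a : K) :
    ⌊(a + w) / w⌋ = ⌊a / w⌋ + 1 := by
  rw [add_div, div_self hw, Int.floor_add_one]

theorem Int.floor_div_eq_zero_iff {w : K} (hw : 0 < w) (a : K) :
    ⌊a / w⌋ = 0 ↔ a ∈ Set.Ico 0 w := by
  simp [Int.floor_eq_zero_iff, le_div_iff₀ hw, div_lt_iff₀ hw]

end FloorDiv

open Set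

theorem Function.Periodic.measure_inter_Ico_eq {μ : Measure ℝ} [μ.IsAddLeftInvariant]
    [NullSingletonClass μ] {A : Set ℝ} {T : ℝ} (hT : 0 < T) (hA : MeasurableSet A)
    (hper : Function.Periodic (· ∈ A) T) (a b : ℝ) :
    μ (A ∩ Ico a (a + T)) = μ (A ∩ Ico b (b + T)) := by
  have hinv : ∀ g : AddSubgroup.zmultiples T, (fun x => g +ᵥ x) ⁻¹' A = A := by
    rintro ⟨_, n, rfl⟩
    ext x
    simpa [add_comm] using hper.zsmul n x
  calc μ (A ∩ Ico a (a + T)) = μ (A ∩ Ioc a (a + T)) :=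
        measure_congr ((ae_eq_refl A).inter Ico_ae_eq_Ioc)
    _ = μ (A ∩ Ioc b (b + T)) :=
        (isAddFundamentalDomain_Ioc hT a μ).measure_set_eq (isAddFundamentalDomain_Ioc hT b μ)
          hA hinv
    _ = μ (A ∩ Ico b (b + T)) :=
        measure_congr ((ae_eq_refl A).inter Ico_ae_eq_Ioc.symm)

theorem volume_setOf_floor_add_div_eq_inter_Ico {w : ℝ} (hw : 0 < w) (x y : ℝ) :
    volume ({t | ⌊(x + t) / w⌋ = ⌊(y + t) / w⌋} ∩ Ico 0 w) = ENNReal.ofReal (w - |x - y|) := by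
  set A := {t : ℝ | ⌊(x + t) / w⌋ = ⌊(y + t) / w⌋}
  have hper : Function.Periodic (· ∈ A) w := fun t => by
    simp only [A, mem_ofPred_eq, ← add_assoc, Int.floor_add_div_self hw.ne', add_left_inj]
  have hA : MeasurableSet A :=
    measurableSet_eq_fun (Int.measurable_floor.comp (by fun_prop))
      (Int.measurable_floor.comp (by fun_prop))
  have hshift : (· + -x) ⁻¹' (A ∩ Ico (-x) (-x + w)) = Ico (x - y) (w + (x - y)) ∩ Ico 0 w := by
    ext s
    have hx : x + (s + -x) = s := by ring
    have hy : y + (s + -x) = s - (x - y) := by ring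
    have hIco : s + -x ∈ Ico (-x) (-x + w) ↔ s ∈ Ico 0 w := by simp [add_comm s]
    simp only [A, mem_preimage, mem_inter_iff, mem_ofPred_eq, hx, hy, hIco]
    refine and_congr_left fun hs => ?_
    rw [(Int.floor_div_eq_zero_iff hw s).2 hs, eq_comm, Int.floor_div_eq_zero_iff hw,
      sub_mem_Ico_iff_left, zero_add]
  calc volume (A ∩ Ico 0 w) = volume (A ∩ Ico (-x) (-x + w)) := by
        simpa using hper.measure_inter_Ico_eq hw hA 0 (-x)
    _ = volume (Ico (x - y) (w + (x - y)) ∩ Ico 0 w) := by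
        rw [← hshift, measure_preimage_add_right]
    _ = ENNReal.ofReal (w - |x - y|) := by
        rw [Ico_inter_Ico, Real.volume_Ico]
        congr 1
        rcases le_total x y with h | h
        · rw [abs_of_nonpos (by linarith), max_eq_right (by linarith), min_eq_left (by linarith)]
          ring
        · rw [abs_of_nonneg (by linarith), max_eq_left (by linarith), min_eq_right (by linarith)]

/-- Single-coordinate collision probability of the randomly shifted grid LSH family:
if `t` is uniform on `[0, w)`, then `Pr[⌊(x+t)/w⌋ = ⌊(y+t)/w⌋] = max(0, 1 − |x−y|/w)`. -/
theorem grid_lsh_collision (w : ℝ) (hw : 0 < w) (x y : ℝ) :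
    ((ENNReal.ofReal w)⁻¹ • volume.restrict (Set.Ico (0:ℝ) w))
        {t | ⌊(x + t) / w⌋ = ⌊(y + t) / w⌋}
      = ENNReal.ofReal (max 0 (1 - |x - y| / w)) := by
  rw [Measure.smul_apply, Measure.restrict_apply' measurableSet_Ico, smul_eq_mul,
    volume_setOf_floor_add_div_eq_inter_Ico hw, ← ENNReal.div_eq_inv_mul,
    ← ENNReal.ofReal_div_of_pos hw, sub_div, div_self hw.ne', max_comm, ENNReal.ofReal_max,
    ENNReal.ofReal_zero, max_zero]
end
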